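/- arXiv:1010.6090 — 2 statements merged into one kernel-verified Lean document; each statement's English description precedes it below -/
import Mathlib

section
/- Let α > 0, 0 < β < 1, ρ > 0 and let B(z) = ∏_{n=0}^∞ B_{α,β^nρ}(z). Then for every x ∈ ℝ and every y with 0 < y < α/ρ, one has the lower estimate |B(x+iy)| ≥ exp( − (1+e^{−πα})·πρy / ((e^{−πρy} − e^{−πα})(1−β)) ). -/
open Complex

/-- The function `B_{α,γ}(z) = (e^{iπγz} + e^{−πα})/(1 + e^{iπγz−πα})`. -/
noncomputable def Bag (α γ : ℝ) (z : ℂ) : ℂ :=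
  (Complex.exp (Complex.I * Real.pi * γ * z) + Complex.exp (-(Real.pi * α : ℝ))) /
    (1 + Complex.exp (Complex.I * Real.pi * γ * z - (Real.pi * α : ℝ)))

/-- The Blaschke product `B(z) = ∏_{n=0}^∞ B_{α,β^nρ}(z)`. -/
noncomputable def Bprod (α β ρ : ℝ) (z : ℂ) : ℂ :=
  ∏' n : ℕ, Bag α (β ^ n * ρ) z

/-!
With `w = e^{iπγz}` and `a = e^{-πα}`, the factor `B_{α,γ}` is the disc automorphism
`(w + a)/(1 + a w)`, whose modulus on the circle `|w| = s` is at least `(s - a)/(1 - a s)`.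
At `z = x + iy` we have `s = e^{-πγy}`, and for `γ ≤ ρ` the elementary bound `1 - s ≤ πγy` turns
this into `|B_{α,γ}(z)| ≥ exp(-K πγy)` with `K = (1 + a)/(e^{-πρy} - a)`. Taking `γ = β^n ρ`, the
exponents sum to the geometric series `K πρy/(1 - β)`.
-/

theorem div_le_norm_add_div_one_add_mul (w : ℂ) {a : ℝ} (ha0 : 0 ≤ a) (ha1 : a < 1)
    (hw : ‖w‖ ≤ 1) : (‖w‖ - a) / (1 - a * ‖w‖) ≤ ‖(w + a) / (1 + a * w)‖ := by
  set s := ‖w‖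
  have hu : -s ≤ w.re := (abs_le.1 (abs_re_le_norm w)).1
  have hs2 : w.re * w.re + w.im * w.im = s ^ 2 := by
    rw [← normSq_apply, ← Complex.sq_norm]
  have hnum : ‖w + a‖ ^ 2 = s ^ 2 + 2 * a * w.re + a ^ 2 := by
    simp only [Complex.sq_norm, normSq_apply, add_re, add_im, ofReal_re, ofReal_im]
    linear_combination hs2
  have hden : ‖1 + a * w‖ ^ 2 = 1 + 2 * a * w.re + a ^ 2 * s ^ 2 := by
    simp only [Complex.sq_norm, normSq_apply, add_re, add_im, mul_re, mul_im, ofReal_re,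
      ofReal_im, one_re, one_im]
    linear_combination a ^ 2 * hs2
  have has : 0 < 1 - a * s := by nlinarith [norm_nonneg w]
  have hden_ge : 1 - a * s ≤ ‖1 + a * w‖ := by
    refine le_of_sq_le_sq ?_ (norm_nonneg _)
    nlinarith
  -- the difference of the squares is `2a(1 - a²)(1 - s²)(Re w + s)`
  have key : (s - a) * ‖1 + a * w‖ ≤ (1 - a * s) * ‖w + a‖ := by
    rcases lt_or_ge s a with hsa | hsa
    · nlinarith [norm_nonneg (1 + a * w), norm_nonneg (w + a)]
    refine le_of_sq_le_sq ?_ (by positivity)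
    have : 0 ≤ 2 * a * (1 - a ^ 2) * (1 - s ^ 2) * (w.re + s) := by
      have : 0 ≤ s := norm_nonneg w
      refine mul_nonneg (mul_nonneg (mul_nonneg ?_ ?_) ?_) ?_ <;> nlinarith
    rw [mul_pow, mul_pow, hnum, hden]
    linear_combination this
  rw [norm_div, div_le_div_iff₀ has (has.trans_le hden_ge)]
  linarith

theorem Bag_eq (α γ : ℝ) (z : ℂ) :
    Bag α γ z = (exp (I * Real.pi * γ * z) + (Real.exp (-(Real.pi * α)) : ℝ)) /
      (1 + (Real.exp (-(Real.pi * α)) : ℝ) * exp (I * Real.pi * γ * z)) := by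
  rw [Bag, ofReal_exp, exp_sub, ofReal_neg, exp_neg, div_eq_mul_inv (exp _) (exp _)]
  ring

theorem norm_exp_I_mul_pi_mul (γ x y : ℝ) :
    ‖exp (I * Real.pi * γ * ((x : ℂ) + (y : ℂ) * I))‖ = Real.exp (-(Real.pi * γ * y)) := by
  rw [norm_exp]
  congr 1
  simp

/-- For `s = e^{-t}` this is `(s - a)/(1 - as) ≥ 1/(1 + Kt)`, which follows from
`s - a ≥ e^{-T} - a` and `1 - s ≤ t`. -/
theorem exp_neg_mul_le_div {a t T : ℝ} (ha : 0 ≤ a) (ht : 0 ≤ t) (htT : t ≤ T)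
    (haT : a < Real.exp (-T)) :
    Real.exp (-((1 + a) / (Real.exp (-T) - a) * t)) ≤
      (Real.exp (-t) - a) / (1 - a * Real.exp (-t)) := by
  set s := Real.exp (-t)
  set K := (1 + a) / (Real.exp (-T) - a)
  have hTs : Real.exp (-T) ≤ s := Real.exp_le_exp.2 (by linarith)
  have hs1 : s ≤ 1 := Real.exp_le_one_iff.2 (by linarith)
  have hK : 0 ≤ K := div_nonneg (by linarith) (by linarith)
  have hKD : K * (Real.exp (-T) - a) = 1 + a := div_mul_cancel₀ _ (by linarith)
  have h1s : 1 - s ≤ t := by linarith [Real.add_one_le_exp (-t)]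
  have hmain : 1 - a * s ≤ (1 + K * t) * (s - a) := by
    have : K * t * (Real.exp (-T) - a) ≤ K * t * (s - a) := by gcongr
    nlinarith
  calc Real.exp (-(K * t)) ≤ 1 / (1 + K * t) := by
        rw [Real.exp_neg, one_div]
        exact inv_anti₀ (by positivity) (by linarith [Real.add_one_le_exp (K * t)])
    _ ≤ (s - a) / (1 - a * s) := by
        rw [div_le_div_iff₀ (by positivity) (by nlinarith)]
        linarith

theorem exp_neg_mul_le_norm_Bag {α γ ρ y : ℝ} (x : ℝ) (hγ : 0 ≤ γ) (hγρ : γ ≤ ρ) (hy : 0 ≤ y)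
    (hρy : ρ * y < α) :
    Real.exp (-((1 + Real.exp (-(Real.pi * α))) /
        (Real.exp (-(Real.pi * ρ * y)) - Real.exp (-(Real.pi * α))) * (Real.pi * γ * y))) ≤
      ‖Bag α γ ((x : ℂ) + (y : ℂ) * I)‖ := by
  have hπ := Real.pi_pos
  have haT : Real.exp (-(Real.pi * α)) < Real.exp (-(Real.pi * ρ * y)) :=
    Real.exp_lt_exp.2 (by nlinarith)
  have hs1 : Real.exp (-(Real.pi * γ * y)) ≤ 1 :=
    Real.exp_le_one_iff.2 (neg_nonpos.2 (by positivity))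
  have ha1 : Real.exp (-(Real.pi * α)) < 1 :=
    haT.trans_le (Real.exp_le_one_iff.2 (by nlinarith [mul_nonneg (hγ.trans hγρ) hy]))
  refine (exp_neg_mul_le_div (Real.exp_pos _).le (by positivity) (by gcongr) haT).trans ?_
  rw [Bag_eq, ← norm_exp_I_mul_pi_mul γ x y]
  exact div_le_norm_add_div_one_add_mul _ (Real.exp_pos _).le ha1
    ((norm_exp_I_mul_pi_mul γ x y).trans_le hs1)

theorem exp_neg_tsum_le_norm_tprod {ι E : Type*} [SeminormedCommRing E] [NormMulClass E]
    [NormOneClass E] {f : ι → E} {c : ι → ℝ} (hc : Summable c) (hc0 : 0 ≤ c)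
    (hf : ∀ i, Real.exp (-c i) ≤ ‖f i‖) : Real.exp (-∑' i, c i) ≤ ‖∏' i, f i‖ := by
  by_cases hm : Multipliable f
  · refine ge_of_tendsto' hm.hasProd.norm fun s => ?_
    calc Real.exp (-∑' i, c i) ≤ Real.exp (-∑ i ∈ s, c i) :=
          Real.exp_le_exp.2 (neg_le_neg (hc.sum_le_tsum s fun i _ => hc0 i))
      _ = ∏ i ∈ s, Real.exp (-c i) := by rw [← Finset.sum_neg_distrib, Real.exp_sum]
      _ ≤ ∏ i ∈ s, ‖f i‖ :=
          Finset.prod_le_prod (fun i _ => (Real.exp_pos _).le) fun i _ => hf i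
  · rw [tprod_eq_one_of_not_multipliable hm, norm_one, Real.exp_le_one_iff, neg_nonpos]
    exact tsum_nonneg hc0

theorem Bprod_lower_estimate_general (α β ρ : ℝ) (hβ0 : 0 < β) (hβ1 : β < 1)
    (hρ : 0 < ρ) (x y : ℝ) (hy0 : 0 < y) (hy1 : y < α / ρ) :
    Real.exp (-((1 + Real.exp (-(Real.pi * α))) * (Real.pi * ρ * y) /
        ((Real.exp (-(Real.pi * ρ * y)) - Real.exp (-(Real.pi * α))) * (1 - β)))) ≤
      ‖Bprod α β ρ ((x : ℂ) + (y : ℂ) * Complex.I)‖ := by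
  have hρy : ρ * y < α := by rwa [lt_div_iff₀ hρ, mul_comm] at hy1
  set K := (1 + Real.exp (-(Real.pi * α))) /
    (Real.exp (-(Real.pi * ρ * y)) - Real.exp (-(Real.pi * α))) with hK_def
  have hK : 0 < K := div_pos (by positivity)
    (sub_pos.2 (Real.exp_lt_exp.2 (by nlinarith [Real.pi_pos])))
  have hgeom : HasSum (fun n : ℕ => K * (Real.pi * (β ^ n * ρ) * y))
      (K * (Real.pi * ρ * y) * (1 - β)⁻¹) :=
    ((hasSum_geometric_of_lt_one hβ0.le hβ1).mul_left _).congr_fun fun n => by ring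
  have hfactor (n : ℕ) := exp_neg_mul_le_norm_Bag (γ := β ^ n * ρ) x (by positivity)
    (mul_le_of_le_one_left hρ.le (pow_le_one₀ hβ0.le hβ1.le)) hy0.le hρy
  calc _ = Real.exp (-∑' n : ℕ, K * (Real.pi * (β ^ n * ρ) * y)) := by
        rw [hgeom.tsum_eq, hK_def, div_mul_eq_mul_div, ← div_eq_mul_inv, div_div]
    _ ≤ _ := exp_neg_tsum_le_norm_tprod hgeom.summable (fun n => by positivity) hfactor

/-- lower estimate for `|B(x+iy)|` in the strip `0 < y < α/ρ`. -/
theorem Bprod_lower_estimate (α β ρ : ℝ) (hα : 0 < α) (hβ0 : 0 < β) (hβ1 : β < 1)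
    (hρ : 0 < ρ) (x y : ℝ) (hy0 : 0 < y) (hy1 : y < α / ρ) :
    Real.exp (-((1 + Real.exp (-(Real.pi * α))) * (Real.pi * ρ * y) /
        ((Real.exp (-(Real.pi * ρ * y)) - Real.exp (-(Real.pi * α))) * (1 - β)))) ≤
      ‖Bprod α β ρ ((x : ℂ) + (y : ℂ) * Complex.I)‖ :=
  Bprod_lower_estimate_general α β ρ hβ0 hβ1 hρ x y hy0 hy1
end

section
/- Let α > 0, β = (√(1+α²)−1)/(√(1+α²)+1), ρ > 0, σ(B) = {(2k+1+iα)/(β^nρ) : k ∈ ℤ, n ≥ 0}, and for n ≥ 1 let v_n = i·α√(1+α²)/(ρβⁿ(√(1+α²)+1)). Then for every n ≥ 1 and every λ ∈ σ(B) one has |(v_n−λ)/(v_n−conj λ)| ≥ 1/√(1+2α²), and equality holds for the four nearest zeros λ = (±1+iα)/(ρβⁿ) and λ = (±1+iα)/(ρβⁿ⁻¹). -/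
/-
The pseudohyperbolic distance is invariant under real dilations, and for `z = u i`, `w = x + α i`
one has `|z - w̄|² = |z - w|² + 4uα`; so the bound `1/√(1+2α²)` amounts to
`2u ≤ α(x² + (u - α)²)`, and as `x² ≥ 1` it suffices that `α(1 + (u - α)²) - 2u ≥ 0`.
With `s = √(1+α²)` this quadratic has the roots `a = αs/(s+1)` and `a/β`. Dilating by `β^m ρ`
moves `v_n` to `u = a β^(m-n)`, and no power of `β` lies strictly between `1` and `1/β`.
Equality holds exactly when `x = ±1` and `m - n ∈ {0, -1}`.
-/

open Complex ComplexConjugate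

noncomputable def pseudoDist (z w : ℂ) : ℝ := ‖(z - w) / (z - conj w)‖

lemma normSq_sub_conj (z w : ℂ) :
    normSq (z - conj w) = normSq (z - w) + 4 * z.im * w.im := by
  simp only [normSq_apply, sub_re, sub_im, conj_re, conj_im]
  ring

lemma pseudoDist_div_ofReal (z w : ℂ) {c : ℝ} (hc : c ≠ 0) :
    pseudoDist z (w / c) = pseudoDist (c * z) w := by
  have hc' : (c : ℂ) ≠ 0 := ofReal_ne_zero.mpr hc
  rw [pseudoDist, pseudoDist, map_div₀, conj_ofReal, ← div_div_div_cancel_right₀ hc']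
  field_simp

section UpperHalfPlane

variable {z w : ℂ} {K : ℝ}

lemma normSq_sub_conj_pos (hz : 0 < z.im) (hw : 0 < w.im) : 0 < normSq (z - conj w) := by
  rw [normSq_sub_conj]
  exact add_pos_of_nonneg_of_pos (normSq_nonneg _) (mul_pos (mul_pos four_pos hz) hw)

lemma one_div_sqrt_le_pseudoDist_iff (hK : 0 < K) (hz : 0 < z.im) (hw : 0 < w.im) :
    1 / √K ≤ pseudoDist z w ↔ 4 * z.im * w.im ≤ (K - 1) * normSq (z - w) := by
  rw [pseudoDist, norm_def, normSq_div, one_div, ← Real.sqrt_inv,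
    Real.sqrt_le_sqrt_iff (div_nonneg (normSq_nonneg _) (normSq_nonneg _)),
    le_div_iff₀ (normSq_sub_conj_pos hz hw), inv_mul_le_iff₀ hK, normSq_sub_conj]
  constructor <;> intro h <;> linarith

lemma pseudoDist_eq_one_div_sqrt_iff (hK : 0 < K) (hz : 0 < z.im) (hw : 0 < w.im) :
    pseudoDist z w = 1 / √K ↔ 4 * z.im * w.im = (K - 1) * normSq (z - w) := by
  rw [pseudoDist, norm_def, normSq_div, one_div, ← Real.sqrt_inv,
    Real.sqrt_inj (div_nonneg (normSq_nonneg _) (normSq_nonneg _)) (by positivity),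
    div_eq_iff (normSq_sub_conj_pos hz hw).ne', eq_inv_mul_iff_mul_eq₀ hK.ne', normSq_sub_conj]
  constructor <;> intro h <;> linarith

end UpperHalfPlane

section ImaginaryAxis

variable {α u x : ℝ}

lemma normSq_mul_I_sub (u x α : ℝ) : normSq (u * I - (x + α * I)) = x ^ 2 + (u - α) ^ 2 := by
  simp only [normSq_apply, mul_im, mul_re, add_im, add_re, sub_re, sub_im, ofReal_re, ofReal_im,
    I_re, I_im]
  ring

lemma one_div_sqrt_le_pseudoDist_mul_I (hα : 0 < α) (hu : 0 < u) (hx : 1 ≤ x ^ 2)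
    (h : 2 * u ≤ α * (1 + (u - α) ^ 2)) :
    1 / √(1 + 2 * α ^ 2) ≤ pseudoDist (u * I) (x + α * I) := by
  rw [one_div_sqrt_le_pseudoDist_iff (by positivity) (by simpa using hu) (by simpa using hα),
    normSq_mul_I_sub]
  simp only [mul_im, add_im, ofReal_re, ofReal_im, I_re, I_im]
  nlinarith [mul_le_mul_of_nonneg_left h hα.le, mul_le_mul_of_nonneg_left hx (sq_nonneg α)]

lemma pseudoDist_mul_I_eq (hα : 0 < α) (hu : 0 < u) (hx : x ^ 2 = 1)
    (h : 2 * u = α * (1 + (u - α) ^ 2)) :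
    pseudoDist (u * I) (x + α * I) = 1 / √(1 + 2 * α ^ 2) := by
  rw [pseudoDist_eq_one_div_sqrt_iff (by positivity) (by simpa using hu) (by simpa using hα),
    normSq_mul_I_sub]
  simp only [mul_im, add_im, ofReal_re, ofReal_im, I_re, I_im]
  linear_combination (-2 * α ^ 2) * hx + 2 * α * h

end ImaginaryAxis

lemma zpow_sub_one_mul_zpow_succ_sub_one_nonneg {β : ℝ} (h0 : 0 < β) (h1 : β ≤ 1) (j : ℤ) :
    0 ≤ (β ^ j - 1) * (β ^ (j + 1) - 1) := by
  rcases le_or_gt 0 j with hj | hj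
  · exact mul_nonneg_of_nonpos_of_nonpos (sub_nonpos.2 (zpow_le_one₀ h0 h1 hj))
      (sub_nonpos.2 (zpow_le_one₀ h0 h1 (by omega)))
  · exact mul_nonneg (sub_nonneg.2 (one_le_zpow_of_nonpos₀ h0 h1 hj.le))
      (sub_nonneg.2 (one_le_zpow_of_nonpos₀ h0 h1 (by omega)))

lemma mul_quadratic_eq_factor {α s β a : ℝ} (hs : s ^ 2 = 1 + α ^ 2) (hs1 : 1 < s)
    (hβ : β = (s - 1) / (s + 1)) (ha : a = α * s / (s + 1)) (r : ℝ) :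
    β * (α * (1 + (a * r - α) ^ 2) - 2 * (a * r)) = α * a ^ 2 * (r - 1) * (β * r - 1) := by
  have : s + 1 ≠ 0 := by linarith
  subst hβ ha
  field_simp
  linear_combination
    (-α * ((s - 1) * (s * r - s - 1) ^ 2 - s ^ 2 * (r - 1) * ((s - 1) * r - (s + 1)))) * hs

lemma two_mul_le_quadratic_zpow {α s β a : ℝ} (hα : 0 < α) (hs : s ^ 2 = 1 + α ^ 2)
    (hs1 : 1 < s) (hβ : β = (s - 1) / (s + 1)) (ha : a = α * s / (s + 1)) (j : ℤ) :
    2 * (a * β ^ j) ≤ α * (1 + (a * β ^ j - α) ^ 2) := by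
  have hβ0 : 0 < β := hβ ▸ div_pos (by linarith) (by linarith)
  have hβ1 : β ≤ 1 := hβ ▸ (div_le_one (by linarith)).2 (by linarith)
  have key := mul_quadratic_eq_factor hs hs1 hβ ha (β ^ j)
  rw [mul_comm β (β ^ j), ← zpow_add_one₀ hβ0.ne'] at key
  have : 0 ≤ β * (α * (1 + (a * β ^ j - α) ^ 2) - 2 * (a * β ^ j)) := by
    rw [key, mul_assoc]
    exact mul_nonneg (by positivity) (zpow_sub_one_mul_zpow_succ_sub_one_nonneg hβ0 hβ1 j)
  linarith [nonneg_of_mul_nonneg_right this hβ0]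

lemma two_mul_eq_quadratic_zpow {α s β a : ℝ} (hs : s ^ 2 = 1 + α ^ 2)
    (hs1 : 1 < s) (hβ : β = (s - 1) / (s + 1)) (ha : a = α * s / (s + 1)) {j : ℤ}
    (hj : j = 0 ∨ j = -1) :
    2 * (a * β ^ j) = α * (1 + (a * β ^ j - α) ^ 2) := by
  have hβ0 : β ≠ 0 := hβ ▸ (div_pos (by linarith) (by linarith)).ne'
  have key := mul_quadratic_eq_factor hs hs1 hβ ha (β ^ j)
  rw [mul_comm β (β ^ j), ← zpow_add_one₀ hβ0] at key
  have : (β ^ j - 1) * (β ^ (j + 1) - 1) = 0 := by rcases hj with rfl | rfl <;> simp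
  rw [mul_assoc, this, mul_zero] at key
  linarith [(mul_eq_zero.1 key).resolve_left hβ0]

/-- the points `v_n = iα√(1+α²)/(ρβⁿ(√(1+α²)+1))` lie at pseudohyperbolic
distance at least `1/√(1+2α²)` from every zero of `B`, with equality for the four
nearest zeros `(±1+iα)/(ρβⁿ)` and `(±1+iα)/(ρβⁿ⁻¹)`. -/
theorem vn_distance_to_zero_set
    (α ρ : ℝ) (hα : 0 < α) (hρ : 0 < ρ)
    (β : ℝ) (hβ : β = (Real.sqrt (1 + α ^ 2) - 1) / (Real.sqrt (1 + α ^ 2) + 1))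
    (v : ℕ → ℂ)
    (hv : ∀ n : ℕ, v n =
      ((α * Real.sqrt (1 + α ^ 2) / (ρ * β ^ n * (Real.sqrt (1 + α ^ 2) + 1)) : ℝ) : ℂ) *
        Complex.I)
    (n : ℕ) (hn : 1 ≤ n) :
    (∀ lam : ℂ, (∃ k : ℤ, ∃ m : ℕ,
        lam = ((2 * (k : ℂ) + 1) + (α : ℂ) * Complex.I) / ((β ^ m * ρ : ℝ) : ℂ)) →
      1 / Real.sqrt (1 + 2 * α ^ 2) ≤
        ‖(v n - lam) / (v n - (starRingEnd ℂ) lam)‖) ∧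
    (∀ lam : ℂ,
      (lam = (1 + (α : ℂ) * Complex.I) / ((ρ * β ^ n : ℝ) : ℂ) ∨
       lam = (-1 + (α : ℂ) * Complex.I) / ((ρ * β ^ n : ℝ) : ℂ) ∨
       lam = (1 + (α : ℂ) * Complex.I) / ((ρ * β ^ (n - 1) : ℝ) : ℂ) ∨
       lam = (-1 + (α : ℂ) * Complex.I) / ((ρ * β ^ (n - 1) : ℝ) : ℂ)) →
      ‖(v n - lam) / (v n - (starRingEnd ℂ) lam)‖ =
        1 / Real.sqrt (1 + 2 * α ^ 2)) := by
  set s := √(1 + α ^ 2)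
  have hs : s ^ 2 = 1 + α ^ 2 := Real.sq_sqrt (by positivity)
  have hs1 : 1 < s := (Real.lt_sqrt zero_le_one).2 (by nlinarith)
  have hβ0 : 0 < β := hβ ▸ div_pos (by linarith) (by linarith)
  set a := α * s / (s + 1) with ha
  have ha0 : 0 < a := div_pos (mul_pos hα (by linarith)) (by linarith)
  have hscale (x : ℝ) (m : ℕ) : pseudoDist (v n) ((x + α * I) / ((β ^ m * ρ : ℝ) : ℂ)) =
      pseudoDist ((a * β ^ ((m : ℤ) - n) : ℝ) * I) (x + α * I) := by
    rw [pseudoDist_div_ofReal _ _ (by positivity), hv, ← mul_assoc, ← ofReal_mul,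
      zpow_sub₀ hβ0.ne', zpow_natCast, zpow_natCast]
    congr 3
    rw [ha]
    field_simp
  constructor
  · rintro lam ⟨k, m, rfl⟩
    have hx : 1 ≤ ((2 * k + 1 : ℤ) : ℝ) ^ 2 := by
      exact_mod_cast (one_le_sq_iff_one_le_abs _).2 (Int.one_le_abs (by omega))
    show _ ≤ pseudoDist (v n) _
    rw [show 2 * (k : ℂ) + 1 = ((2 * k + 1 : ℤ) : ℝ) by push_cast; ring, hscale]
    exact one_div_sqrt_le_pseudoDist_mul_I hα (by positivity) hx
      (two_mul_le_quadratic_zpow hα hs hs1 hβ ha _)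
  · intro lam hlam
    obtain ⟨x, m, hx, hm, rfl⟩ : ∃ (x : ℝ) (m : ℕ), x ^ 2 = 1 ∧
        ((m : ℤ) - n = 0 ∨ (m : ℤ) - n = -1) ∧ lam = (x + α * I) / ((β ^ m * ρ : ℝ) : ℂ) := by
      have hpred : ((n - 1 : ℕ) : ℤ) - n = -1 := by omega
      rcases hlam with rfl | rfl | rfl | rfl
      · exact ⟨1, n, by norm_num, by simp, by push_cast; ring⟩
      · exact ⟨-1, n, by norm_num, by simp, by push_cast; ring⟩
      · exact ⟨1, n - 1, by norm_num, Or.inr hpred, by push_cast; ring⟩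
      · exact ⟨-1, n - 1, by norm_num, Or.inr hpred, by push_cast; ring⟩
    show pseudoDist (v n) _ = _
    rw [hscale]
    exact pseudoDist_mul_I_eq hα (by positivity) hx (two_mul_eq_quadratic_zpow hs hs1 hβ ha hm)
end
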